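/- arXiv:math/0604410 — 4 statements merged into one kernel-verified Lean document; each statement's English description precedes it below -/
import Mathlib

section
/- Let n ∈ ℕ and let α : Fin (n+1) → ℝ be strictly positive. Let S_n = {x : Fin n → ℝ | (∀ i, 0 < x_i) ∧ ∑_i x_i < 1} ⊆ ℝ^n with Lebesgue measure. Then ∫_{S_n} (∏_{i : Fin n} x_i^{α_i − 1}) · (1 − ∑_i x_i)^{α_n − 1} dx = (∏_{k : Fin (n+1)} Γ(α_k)) / Γ(∑_k α_k), where α_n denotes the value of α at the last index. (This is the Dirichlet integral, the normalization constant of the Dirichlet distribution.) -/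
/-!
Integrate out the last coordinate `t` over `(0, 1 - ∑ y)`. The substitution
`t = (1 - ∑ y) u` turns this fiber integral into `(1 - ∑ y) ^ (a + b - 1) B(a, b)`, which is the
same integrand in one dimension less, with the last two exponents `a, b` merged into `a + b`.
By induction on `n`, and `B(a, b) = Γ(a) Γ(b) / Γ(a + b)`, the Gamma factors telescope.
Everything is done for lower Lebesgue integrals, so Tonelli applies without integrability side
conditions; the Bochner integral is recovered at the end from nonnegativity.
-/

open Real MeasureTheory Finset

open scoped ENNReal

namespace Dirichlet

open ProbabilityTheory

lemma lintegral_Ioo_rpow_mul_one_sub_rpow {a b : ℝ} (ha : 0 < a) (hb : 0 < b) :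
    ∫⁻ t in Set.Ioo (0 : ℝ) 1, ENNReal.ofReal (t ^ (a - 1) * (1 - t) ^ (b - 1)) =
      ENNReal.ofReal (beta a b) := by
  have hB := beta_pos ha hb
  have h := lintegral_betaPDF_eq_one ha hb
  simp_rw [lintegral_betaPDF, mul_assoc, ENNReal.ofReal_mul (one_div_pos.2 hB).le] at h
  rw [lintegral_const_mul' _ _ ENNReal.ofReal_ne_top, mul_comm] at h
  rw [ENNReal.eq_inv_of_mul_eq_one_left h, one_div, ENNReal.ofReal_inv_of_pos hB, inv_inv]

lemma lintegral_comp_snoc {E : Type*} [MeasurableSpace E] (μ : Measure E) [SigmaFinite μ] {n : ℕ}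
    (f : (Fin (n + 1) → E) → ℝ≥0∞) (hf : Measurable f) :
    ∫⁻ x, f x ∂Measure.pi (fun _ => μ) =
      ∫⁻ y, ∫⁻ t, f (Fin.snoc y t) ∂μ ∂Measure.pi (fun _ => μ) := by
  have he := (measurePreserving_piFinSuccAbove (fun _ => μ) (Fin.last n)).symm
  rw [← he.lintegral_comp hf]
  refine (lintegral_prod_symm _ (hf.comp he.measurable).aemeasurable).trans ?_
  simp [MeasurableEquiv.piFinSuccAbove_symm_apply, Fin.insertNthEquiv, Fin.insertNth_last']

lemma mul_rpow_mul_sub_rpow {a b c u : ℝ} (hc : 0 < c) (hu : u ∈ Set.Ioo 0 1) :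
    c * ((c * u) ^ (a - 1) * (c - c * u) ^ (b - 1)) =
      c ^ (a + b - 1) * (u ^ (a - 1) * (1 - u) ^ (b - 1)) := by
  rw [show c - c * u = c * (1 - u) by ring, mul_rpow hc.le hu.1.le,
    mul_rpow hc.le (sub_nonneg.2 hu.2.le), show a + b - 1 = 1 + (a - 1) + (b - 1) by ring,
    rpow_add hc, rpow_add hc, rpow_one]
  ring

lemma lintegral_Ioo_rpow_mul_sub_rpow {a b c : ℝ} (ha : 0 < a) (hb : 0 < b) (hc : 0 < c) :
    ∫⁻ t in Set.Ioo 0 c, ENNReal.ofReal (t ^ (a - 1) * (c - t) ^ (b - 1)) =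
      ENNReal.ofReal (c ^ (a + b - 1) * beta a b) := by
  have himage : (c * ·) '' Set.Ioo 0 1 = Set.Ioo 0 c := by
    simp [Set.image_mul_left_Ioo hc]
  rw [← himage, lintegral_image_eq_lintegral_abs_deriv_mul measurableSet_Ioo
    (fun u _ => ((hasDerivAt_id' u).const_mul c).hasDerivWithinAt)
    (mul_right_injective₀ hc.ne').injOn]
  have hscale : ∀ u ∈ Set.Ioo (0 : ℝ) 1,
      ENNReal.ofReal |c * 1| * ENNReal.ofReal ((c * u) ^ (a - 1) * (c - c * u) ^ (b - 1)) =
        ENNReal.ofReal (c ^ (a + b - 1)) * ENNReal.ofReal (u ^ (a - 1) * (1 - u) ^ (b - 1)) := by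
    intro u hu
    rw [mul_one, abs_of_pos hc, ← ENNReal.ofReal_mul hc.le, mul_rpow_mul_sub_rpow hc hu,
      ENNReal.ofReal_mul (rpow_nonneg hc.le _)]
  rw [setLIntegral_congr_fun measurableSet_Ioo hscale,
    lintegral_const_mul' _ _ ENNReal.ofReal_ne_top,
    lintegral_Ioo_rpow_mul_one_sub_rpow ha hb, ← ENNReal.ofReal_mul (rpow_nonneg hc.le _)]

def simplex (n : ℕ) : Set (Fin n → ℝ) := {x | (∀ i, 0 < x i) ∧ ∑ i, x i < 1}

lemma measurableSet_simplex (n : ℕ) : MeasurableSet (simplex n) := by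
  simp only [simplex, Set.ofPred_and, Set.ofPred_forall]
  exact (MeasurableSet.iInter fun i =>
      measurableSet_lt measurable_const (measurable_pi_apply i)).inter
    (measurableSet_lt (by fun_prop) measurable_const)

lemma snoc_mem_simplex_iff {n : ℕ} {y : Fin n → ℝ} {t : ℝ} :
    Fin.snoc y t ∈ simplex (n + 1) ↔ y ∈ simplex n ∧ t ∈ Set.Ioo 0 (1 - ∑ i, y i) := by
  simp only [simplex, Set.mem_ofPred_eq, Fin.forall_fin_succ', Fin.sum_univ_castSucc,
    Fin.snoc_castSucc, Fin.snoc_last, Set.mem_Ioo]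
  constructor
  · rintro ⟨⟨hy, ht⟩, hsum⟩
    exact ⟨⟨hy, by linarith⟩, ht, by linarith⟩
  · rintro ⟨⟨hy, -⟩, ht, hsum⟩
    exact ⟨⟨hy, ht⟩, by linarith⟩

noncomputable def kernel {n : ℕ} (α : Fin (n + 1) → ℝ) (x : Fin n → ℝ) : ℝ :=
  (∏ i, x i ^ (α i.castSucc - 1)) * (1 - ∑ i, x i) ^ (α (Fin.last n) - 1)

lemma measurable_kernel {n : ℕ} (α : Fin (n + 1) → ℝ) : Measurable (kernel α) := by
  unfold kernel
  fun_prop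

lemma kernel_nonneg {n : ℕ} (α : Fin (n + 1) → ℝ) {x : Fin n → ℝ} (hx : x ∈ simplex n) :
    0 ≤ kernel α x :=
  mul_nonneg (prod_nonneg fun i _ => rpow_nonneg (hx.1 i).le _)
    (rpow_nonneg (sub_nonneg.2 hx.2.le) _)

lemma kernel_snoc {n : ℕ} (α : Fin (n + 2) → ℝ) (y : Fin n → ℝ) (t : ℝ) :
    kernel α (Fin.snoc y t) = (∏ i, y i ^ (α i.castSucc.castSucc - 1)) *
      (t ^ (α (Fin.last n).castSucc - 1) * (1 - ∑ i, y i - t) ^ (α (Fin.last (n + 1)) - 1)) := by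
  simp only [kernel, Fin.prod_univ_castSucc, Fin.sum_univ_castSucc, Fin.snoc_castSucc,
    Fin.snoc_last, sub_add_eq_sub_sub]
  ring

def mergeLast {M : Type*} [Add M] {n : ℕ} (α : Fin (n + 2) → M) : Fin (n + 1) → M :=
  Fin.snoc (fun i => α i.castSucc.castSucc) (α (Fin.last n).castSucc + α (Fin.last (n + 1)))

lemma sum_mergeLast {M : Type*} [AddCommMonoid M] {n : ℕ} (α : Fin (n + 2) → M) :
    ∑ i, mergeLast α i = ∑ i, α i := by
  simp [mergeLast, Fin.sum_univ_castSucc, add_assoc]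

lemma mergeLast_pos {n : ℕ} {α : Fin (n + 2) → ℝ} (hα : ∀ k, 0 < α k) (k : Fin (n + 1)) :
    0 < mergeLast α k := by
  cases k using Fin.lastCases <;> simp [mergeLast, hα, add_pos]

lemma kernel_mergeLast {n : ℕ} (α : Fin (n + 2) → ℝ) (y : Fin n → ℝ) :
    kernel (mergeLast α) y = (∏ i, y i ^ (α i.castSucc.castSucc - 1)) *
      (1 - ∑ i, y i) ^ (α (Fin.last n).castSucc + α (Fin.last (n + 1)) - 1) := by
  simp [kernel, mergeLast]

lemma prod_Gamma_div_mergeLast_mul_beta {n : ℕ} (α : Fin (n + 2) → ℝ) (hα : ∀ k, 0 < α k) :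
    (∏ k, Gamma (mergeLast α k)) / Gamma (∑ k, mergeLast α k) *
        beta (α (Fin.last n).castSucc) (α (Fin.last (n + 1))) =
      (∏ k, Gamma (α k)) / Gamma (∑ k, α k) := by
  have hab := (Gamma_pos_of_pos (add_pos (hα (Fin.last n).castSucc) (hα (Fin.last (n + 1))))).ne'
  rw [sum_mergeLast, Fin.prod_univ_castSucc, Fin.prod_univ_castSucc, Fin.prod_univ_castSucc, beta]
  simp only [mergeLast, Fin.snoc_castSucc, Fin.snoc_last]
  field_simp

lemma lintegral_indicator_kernel_snoc {n : ℕ} (α : Fin (n + 2) → ℝ) (hα : ∀ k, 0 < α k)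
    (y : Fin n → ℝ) :
    ∫⁻ t, (simplex (n + 1)).indicator (fun x => ENNReal.ofReal (kernel α x)) (Fin.snoc y t) =
      (simplex n).indicator (fun y => ENNReal.ofReal
        (kernel (mergeLast α) y * beta (α (Fin.last n).castSucc) (α (Fin.last (n + 1))))) y := by
  by_cases hy : y ∈ simplex n
  · have hprod : 0 ≤ ∏ i, y i ^ (α i.castSucc.castSucc - 1) :=
      prod_nonneg fun i _ => rpow_nonneg (hy.1 i).le _
    have hfiber : ∀ t, (simplex (n + 1)).indicator (fun x => ENNReal.ofReal (kernel α x))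
          (Fin.snoc y t) =
        (Set.Ioo 0 (1 - ∑ i, y i)).indicator (fun t =>
          ENNReal.ofReal (∏ i, y i ^ (α i.castSucc.castSucc - 1)) * ENNReal.ofReal
            (t ^ (α (Fin.last n).castSucc - 1) * (1 - ∑ i, y i - t) ^ (α (Fin.last (n + 1)) - 1)))
          t := by
      intro t
      by_cases ht : t ∈ Set.Ioo 0 (1 - ∑ i, y i)
      · rw [Set.indicator_of_mem (snoc_mem_simplex_iff.2 ⟨hy, ht⟩), Set.indicator_of_mem ht,
          kernel_snoc, ENNReal.ofReal_mul hprod]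
      · rw [Set.indicator_of_notMem (fun h => ht (snoc_mem_simplex_iff.1 h).2),
          Set.indicator_of_notMem ht]
    rw [lintegral_congr hfiber, lintegral_indicator measurableSet_Ioo,
      lintegral_const_mul' _ _ ENNReal.ofReal_ne_top,
      lintegral_Ioo_rpow_mul_sub_rpow (hα _) (hα _) (sub_pos.2 hy.2), Set.indicator_of_mem hy,
      ← ENNReal.ofReal_mul hprod, kernel_mergeLast, mul_assoc]
  · have hfiber : ∀ t, (simplex (n + 1)).indicator (fun x => ENNReal.ofReal (kernel α x))
        (Fin.snoc y t) = 0 :=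
      fun t => Set.indicator_of_notMem (fun h => hy (snoc_mem_simplex_iff.1 h).1) _
    simp only [hfiber, lintegral_zero, Set.indicator_of_notMem hy]

theorem lintegral_kernel {n : ℕ} (α : Fin (n + 1) → ℝ) (hα : ∀ k, 0 < α k) :
    ∫⁻ x in simplex n, ENNReal.ofReal (kernel α x) =
      ENNReal.ofReal ((∏ k, Gamma (α k)) / Gamma (∑ k, α k)) := by
  induction n with
  | zero =>
    have hsimplex : simplex 0 = Set.univ := by ext x; simp [simplex]
    simp [hsimplex, kernel, volume_pi, div_self (Gamma_pos_of_pos (hα 0)).ne']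
  | succ n ih =>
    have hB := beta_pos (hα (Fin.last n).castSucc) (hα (Fin.last (n + 1)))
    calc ∫⁻ x in simplex (n + 1), ENNReal.ofReal (kernel α x)
        = ∫⁻ y, ∫⁻ t, (simplex (n + 1)).indicator (fun x => ENNReal.ofReal (kernel α x))
            (Fin.snoc y t) := by
          rw [← lintegral_indicator (measurableSet_simplex _)]
          exact lintegral_comp_snoc volume _
            ((measurable_kernel α).ennreal_ofReal.indicator (measurableSet_simplex _))
      _ = ∫⁻ y in simplex n, ENNReal.ofReal (kernel (mergeLast α) y *
            beta (α (Fin.last n).castSucc) (α (Fin.last (n + 1)))) := by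
          rw [← lintegral_indicator (measurableSet_simplex _)]
          exact lintegral_congr (lintegral_indicator_kernel_snoc α hα)
      _ = ENNReal.ofReal ((∏ k, Gamma (α k)) / Gamma (∑ k, α k)) := by
          simp_rw [ENNReal.ofReal_mul' hB.le]
          rw [lintegral_mul_const' _ _ ENNReal.ofReal_ne_top, ih _ (mergeLast_pos hα),
            ← ENNReal.ofReal_mul' hB.le, prod_Gamma_div_mergeLast_mul_beta α hα]

end Dirichlet

/-- The Dirichlet integral: the normalization constant of the Dirichlet distribution. -/
theorem dirichlet_integral (n : ℕ) (α : Fin (n + 1) → ℝ) (hα : ∀ k, 0 < α k) :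
    ∫ x in {x : Fin n → ℝ | (∀ i, 0 < x i) ∧ ∑ i, x i < 1},
        (∏ i : Fin n, x i ^ (α i.castSucc - 1)) * (1 - ∑ i, x i) ^ (α (Fin.last n) - 1) =
      (∏ k, Real.Gamma (α k)) / Real.Gamma (∑ k, α k) := by
  change ∫ x in Dirichlet.simplex n, Dirichlet.kernel α x = _
  have hnonneg : 0 ≤ (∏ k, Real.Gamma (α k)) / Real.Gamma (∑ k, α k) :=
    div_nonneg (prod_nonneg fun k _ => (Gamma_pos_of_pos (hα k)).le)
      (Gamma_pos_of_pos (sum_pos (fun k _ => hα k) univ_nonempty)).le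
  rw [integral_eq_lintegral_of_nonneg_ae
      ((ae_restrict_iff' (Dirichlet.measurableSet_simplex n)).2
        (ae_of_all _ fun _ => Dirichlet.kernel_nonneg α))
      (Dirichlet.measurable_kernel α).aestronglyMeasurable,
    Dirichlet.lintegral_kernel α hα, ENNReal.toReal_ofReal hnonneg]
end

section
/- Let n ∈ ℕ, let α : Fin (n+1) → ℝ be strictly positive, let w : Fin (n+1) → ℕ, and set L = ∑_k w_k and A = ∑_k α_k. With S_n = {x : Fin n → ℝ | (∀ i, 0 < x_i) ∧ ∑_i x_i < 1} ⊆ ℝ^n with Lebesgue measure, and writing x_n := 1 − ∑_{i : Fin n} x_i for the last coordinate, ∫_{S_n} (L! / ∏_k (w_k)!) · (∏_{k : Fin (n+1)} x_k^{w_k}) · (Γ(A) / ∏_k Γ(α_k)) · (∏_{k : Fin (n+1)} x_k^{α_k − 1}) dx = (L! / ∏_k (w_k)!) · (Γ(A) / Γ(L + A)) · ∏_{k : Fin (n+1)} (Γ(w_k + α_k) / Γ(α_k)). (Marginalizing a multinomial over a Dirichlet-distributed probability vector yields the Dirichlet-multinomial/Pólya distribution.) -/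
/-!
Multiplying the multinomial weight ∏ x_k ^ w_k into the Dirichlet density with parameters α
gives the unnormalised Dirichlet density with parameters w + α, so everything reduces to the
Dirichlet integral ∫_{S_m} ∏ x_k ^ (β_k - 1) = ∏ Γ(β_k) / Γ(∑ β_k). That is proved by induction
on m: splitting off the first coordinate t, the other coordinates range over the simplex of size
1 - t; rescaling it to the unit simplex pulls out (1 - t) ^ (∑_{k ≥ 1} β_k - 1), and what is left
in t is a Beta integral.
-/

open Real MeasureTheory Finset

def openSimplex (m : ℕ) (c : ℝ) : Set (Fin m → ℝ) :=
  {x | (∀ i, 0 < x i) ∧ ∑ i, x i < c}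

def appendRemainder {m : ℕ} (c : ℝ) (x : Fin m → ℝ) : Fin (m + 1) → ℝ :=
  Fin.snoc x (c - ∑ i, x i)

noncomputable def dirichletWeight {m : ℕ} (β : Fin (m + 1) → ℝ) (c : ℝ) (x : Fin m → ℝ) :
    ℝ :=
  ∏ k, appendRemainder c x k ^ (β k - 1)

lemma measurableSet_openSimplex (m : ℕ) (c : ℝ) : MeasurableSet (openSimplex m c) := by
  simp only [openSimplex, Set.ofPred_and, Set.ofPred_forall]
  exact (MeasurableSet.iInter fun i =>
      measurableSet_lt measurable_const (measurable_pi_apply i)).inter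
    (measurableSet_lt (by fun_prop) measurable_const)

lemma measurable_appendRemainder (m : ℕ) (c : ℝ) :
    Measurable (appendRemainder (m := m) c) := by
  refine measurable_pi_iff.2 fun k => ?_
  induction k using Fin.lastCases with
  | last => simp only [appendRemainder, Fin.snoc_last]; fun_prop
  | cast i => simpa [appendRemainder] using measurable_pi_apply i

lemma measurable_dirichletWeight {m : ℕ} (β : Fin (m + 1) → ℝ) (c : ℝ) :
    Measurable (dirichletWeight β c) := by
  have := measurable_appendRemainder m c
  unfold dirichletWeight
  fun_prop

lemma appendRemainder_pos {m : ℕ} {c : ℝ} {x : Fin m → ℝ} (hx : x ∈ openSimplex m c) (k) :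
    0 < appendRemainder c x k := by
  induction k using Fin.lastCases with
  | last => simpa [appendRemainder] using hx.2
  | cast i => simpa [appendRemainder] using hx.1 i

lemma appendRemainder_cons {m : ℕ} (c t : ℝ) (y : Fin m → ℝ) :
    appendRemainder c (Fin.cons t y : Fin (m + 1) → ℝ) =
      Fin.cons t (appendRemainder (c - t) y) := by
  simp only [appendRemainder, Fin.sum_cons, sub_add_eq_sub_sub, Fin.cons_snoc_eq_snoc_cons]

lemma appendRemainder_smul {m : ℕ} (r c : ℝ) (x : Fin m → ℝ) :
    appendRemainder (r * c) (r • x) = r • appendRemainder c x := by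
  simp only [appendRemainder, Pi.smul_apply, smul_eq_mul, ← Finset.mul_sum, ← mul_sub]
  ext k
  induction k using Fin.lastCases <;> simp

lemma cons_mem_openSimplex_iff {m : ℕ} {c t : ℝ} {y : Fin m → ℝ} :
    (Fin.cons t y : Fin (m + 1) → ℝ) ∈ openSimplex (m + 1) c ↔
      t ∈ Set.Ioo 0 c ∧ y ∈ openSimplex m (c - t) := by
  simp only [openSimplex, Set.mem_ofPred_eq, Fin.forall_fin_succ, Fin.cons_zero, Fin.cons_succ,
    Fin.sum_cons, Set.mem_Ioo, lt_sub_iff_add_lt']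
  constructor
  · rintro ⟨⟨ht, hy⟩, hsum⟩
    have := Finset.sum_nonneg fun i (_ : i ∈ univ) => (hy i).le
    exact ⟨⟨ht, by linarith⟩, hy, hsum⟩
  · rintro ⟨⟨ht, -⟩, hy, hsum⟩
    exact ⟨⟨ht, hy⟩, hsum⟩

lemma smul_mem_openSimplex_iff {m : ℕ} {r c : ℝ} (hr : 0 < r) {x : Fin m → ℝ} :
    r • x ∈ openSimplex m (r * c) ↔ x ∈ openSimplex m c := by
  simp only [openSimplex, Set.mem_ofPred_eq, Pi.smul_apply, smul_eq_mul, ← Finset.mul_sum,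
    mul_pos_iff_of_pos_left hr, mul_lt_mul_iff_right₀ hr]

lemma dirichletWeight_nonneg {m : ℕ} (β : Fin (m + 1) → ℝ) {c : ℝ} {x : Fin m → ℝ}
    (hx : x ∈ openSimplex m c) : 0 ≤ dirichletWeight β c x :=
  prod_nonneg fun k _ => rpow_nonneg (appendRemainder_pos hx k).le _

lemma dirichletWeight_cons {m : ℕ} (β : Fin (m + 2) → ℝ) (c t : ℝ) (y : Fin m → ℝ) :
    dirichletWeight β c (Fin.cons t y : Fin (m + 1) → ℝ) =
      t ^ (β 0 - 1) * dirichletWeight (Fin.tail β) (c - t) y := by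
  simp only [dirichletWeight, appendRemainder_cons, Fin.prod_univ_succ, Fin.cons_zero,
    Fin.cons_succ, Fin.tail]

lemma dirichletWeight_smul {m : ℕ} (β : Fin (m + 1) → ℝ) {r c : ℝ} (hr : 0 < r)
    {x : Fin m → ℝ} (hx : x ∈ openSimplex m c) :
    dirichletWeight β (r * c) (r • x) =
      r ^ (∑ k, β k - (m + 1)) * dirichletWeight β c x := by
  simp only [dirichletWeight, appendRemainder_smul, Pi.smul_apply, smul_eq_mul]
  rw [Finset.prod_congr rfl fun k _ => Real.mul_rpow hr.le (appendRemainder_pos hx k).le,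
    Finset.prod_mul_distrib, ← Real.rpow_sum_of_pos hr, Finset.sum_sub_distrib]
  simp

theorem lintegral_comp_smul_addHaar {E : Type*} [NormedAddCommGroup E] [NormedSpace ℝ E]
    [MeasurableSpace E] [BorelSpace E] [FiniteDimensional ℝ E] (μ : Measure E)
    [μ.IsAddHaarMeasure] (f : E → ENNReal) {r : ℝ} (hr : r ≠ 0) :
    ∫⁻ x, f (r • x) ∂μ =
      ENNReal.ofReal |(r ^ Module.finrank ℝ E)⁻¹| * ∫⁻ x, f x ∂μ := by
  rw [← smul_eq_mul, ← lintegral_smul_measure, ← Measure.map_addHaar_smul μ hr]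
  exact (lintegral_map_equiv f (MeasurableEquiv.smul₀ r hr)).symm

lemma setLIntegral_openSimplex_mul (m : ℕ) {r : ℝ} (hr : 0 < r) (c : ℝ)
    (f : (Fin m → ℝ) → ENNReal) :
    ∫⁻ x in openSimplex m (r * c), f x =
      ENNReal.ofReal (r ^ m) * ∫⁻ x in openSimplex m c, f (r • x) := by
  have hindicator : ∀ x, (openSimplex m c).indicator (fun y => f (r • y)) (r⁻¹ • x) =
      (openSimplex m (r * c)).indicator f x := by
    intro x
    have hmem : r⁻¹ • x ∈ openSimplex m c ↔ x ∈ openSimplex m (r * c) := by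
      simpa only [inv_mul_cancel_left₀ hr.ne'] using
        smul_mem_openSimplex_iff (inv_pos.2 hr) (c := r * c) (x := x)
    by_cases hx : x ∈ openSimplex m (r * c)
    · rw [Set.indicator_of_mem (hmem.2 hx), Set.indicator_of_mem hx, smul_inv_smul₀ hr.ne']
    · rw [Set.indicator_of_notMem (mt hmem.1 hx), Set.indicator_of_notMem hx]
  have hscale := lintegral_comp_smul_addHaar volume
    ((openSimplex m c).indicator fun y => f (r • y)) (inv_ne_zero hr.ne')
  rw [Module.finrank_fin_fun, inv_pow, inv_inv, abs_of_pos (by positivity)] at hscale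
  simp_rw [hindicator] at hscale
  rwa [← lintegral_indicator (measurableSet_openSimplex m _),
    ← lintegral_indicator (measurableSet_openSimplex m _)]

lemma setLIntegral_Ioo_rpow_mul_one_sub_rpow {a b : ℝ} (ha : 0 < a) (hb : 0 < b) :
    ∫⁻ t in Set.Ioo 0 1, ENNReal.ofReal (t ^ (a - 1) * (1 - t) ^ (b - 1)) =
      ENNReal.ofReal (ProbabilityTheory.beta a b) := by
  have hbeta := ProbabilityTheory.beta_pos ha hb
  have h := ProbabilityTheory.lintegral_betaPDF_eq_one ha hb
  simp_rw [ProbabilityTheory.lintegral_betaPDF, mul_assoc,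
    ENNReal.ofReal_mul (one_div_pos.2 hbeta).le] at h
  rw [lintegral_const_mul' _ _ ENNReal.ofReal_ne_top, mul_comm] at h
  rw [ENNReal.eq_inv_of_mul_eq_one_left h, one_div, ENNReal.ofReal_inv_of_pos hbeta, inv_inv]

lemma setLIntegral_openSimplex_succ (m : ℕ) (c : ℝ) {f : (Fin (m + 1) → ℝ) → ENNReal}
    (hf : Measurable f) :
    ∫⁻ x in openSimplex (m + 1) c, f x =
      ∫⁻ t in Set.Ioo 0 c, ∫⁻ y in openSimplex m (c - t), f (Fin.cons t y) := by
  set e := MeasurableEquiv.piFinSuccAbove (fun _ : Fin (m + 1) => ℝ) 0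
  have he : MeasurePreserving e.symm := (volume_preserving_piFinSuccAbove _ 0).symm e
  have hindicator : ∀ t y, (openSimplex (m + 1) c).indicator f (e.symm (t, y)) =
      (Set.Ioo 0 c).indicator (fun t => (openSimplex m (c - t)).indicator
        (fun y => f (Fin.cons t y)) y) t := by
    intro t y
    classical
    simp only [e, MeasurableEquiv.piFinSuccAbove_symm_apply, Fin.insertNthEquiv_zero,
      Fin.consEquiv, Equiv.coe_fn_mk, Set.indicator_apply, cons_mem_openSimplex_iff, ite_and]
  rw [← lintegral_indicator (measurableSet_openSimplex _ _),
    ← he.lintegral_comp_emb e.symm.measurableEmbedding, Measure.volume_eq_prod,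
    lintegral_prod (fun p => (openSimplex (m + 1) c).indicator f (e.symm p))
      ((hf.indicator (measurableSet_openSimplex _ _)).comp e.symm.measurable).aemeasurable,
    ← lintegral_indicator measurableSet_Ioo]
  refine lintegral_congr fun t => ?_
  simp only [hindicator]
  by_cases ht : t ∈ Set.Ioo 0 c
  · simp only [Set.indicator_of_mem ht, lintegral_indicator (measurableSet_openSimplex _ _)]
  · simp [Set.indicator_of_notMem ht]

lemma setLIntegral_dirichletWeight_eq_rpow_mul {m : ℕ} (β : Fin (m + 1) → ℝ) {r : ℝ}
    (hr : 0 < r) :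
    ∫⁻ x in openSimplex m r, ENNReal.ofReal (dirichletWeight β r x) =
      ENNReal.ofReal (r ^ (∑ k, β k - 1)) *
        ∫⁻ x in openSimplex m 1, ENNReal.ofReal (dirichletWeight β 1 x) := by
  have hscale :=
    setLIntegral_openSimplex_mul m hr 1 fun x => ENNReal.ofReal (dirichletWeight β r x)
  have hweight : ∀ x ∈ openSimplex m 1, ENNReal.ofReal (dirichletWeight β r (r • x)) =
      ENNReal.ofReal (r ^ (∑ k, β k - (m + 1))) * ENNReal.ofReal (dirichletWeight β 1 x) :=
    fun x hx => by
      rw [← ENNReal.ofReal_mul (rpow_nonneg hr.le _), ← dirichletWeight_smul β hr hx, mul_one]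
  rw [mul_one] at hscale
  rw [hscale, setLIntegral_congr_fun (measurableSet_openSimplex m 1) hweight,
    lintegral_const_mul' _ _ ENNReal.ofReal_ne_top, ← mul_assoc,
    ← ENNReal.ofReal_mul (by positivity), ← rpow_natCast, ← rpow_add hr]
  ring_nf

theorem setLIntegral_dirichletWeight :
    ∀ {m : ℕ} (β : Fin (m + 1) → ℝ), (∀ k, 0 < β k) →
    ∫⁻ x in openSimplex m 1, ENNReal.ofReal (dirichletWeight β 1 x) =
      ENNReal.ofReal ((∏ k, Gamma (β k)) / Gamma (∑ k, β k))
  | 0, β, hβ => by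
    have hsimplex : openSimplex 0 1 = Set.univ := by ext x; simp [openSimplex]
    have hweight : ∀ x, dirichletWeight β 1 x = 1 := fun x => by
      simp [dirichletWeight, appendRemainder, Fin.snoc]
    simp [hsimplex, hweight, div_self (Gamma_pos_of_pos (hβ 0)).ne', volume_pi]
  | m + 1, β, hβ => by
    have hβ' : ∀ j, 0 < Fin.tail β j := fun j => hβ j.succ
    set B := ∑ j, Fin.tail β j
    have hB : 0 < B := sum_pos (fun j _ => hβ' j) univ_nonempty
    calc ∫⁻ x in openSimplex (m + 1) 1, ENNReal.ofReal (dirichletWeight β 1 x)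
        = ∫⁻ t in Set.Ioo 0 1, ∫⁻ y in openSimplex m (1 - t),
            ENNReal.ofReal (t ^ (β 0 - 1) * dirichletWeight (Fin.tail β) (1 - t) y) := by
          simp only [setLIntegral_openSimplex_succ m 1
            (measurable_dirichletWeight β 1).ennreal_ofReal,
            dirichletWeight_cons]
      _ = ∫⁻ t in Set.Ioo 0 1, ENNReal.ofReal (t ^ (β 0 - 1) * (1 - t) ^ (B - 1)) *
            ENNReal.ofReal ((∏ j, Gamma (Fin.tail β j)) / Gamma B) := by
          refine setLIntegral_congr_fun measurableSet_Ioo fun t ht => ?_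
          rw [← setLIntegral_dirichletWeight (Fin.tail β) hβ']
          simp_rw [ENNReal.ofReal_mul (rpow_nonneg ht.1.le _)]
          rw [lintegral_const_mul' _ _ ENNReal.ofReal_ne_top,
            setLIntegral_dirichletWeight_eq_rpow_mul _ (sub_pos.2 ht.2), mul_assoc]
      _ = ENNReal.ofReal ((∏ k, Gamma (β k)) / Gamma (∑ k, β k)) := by
          rw [lintegral_mul_const' _ _ ENNReal.ofReal_ne_top,
            setLIntegral_Ioo_rpow_mul_one_sub_rpow (hβ 0) hB,
            ← ENNReal.ofReal_mul (ProbabilityTheory.beta_pos (hβ 0) hB).le]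
          congr 1
          have := (Gamma_pos_of_pos hB).ne'
          rw [ProbabilityTheory.beta, Fin.prod_univ_succ fun k => Gamma (β k),
            Fin.sum_univ_succ β]
          change _ = Gamma (β 0) * (∏ j, Gamma (Fin.tail β j)) / Gamma (β 0 + B)
          field_simp

theorem setIntegral_dirichletWeight {m : ℕ} (β : Fin (m + 1) → ℝ) (hβ : ∀ k, 0 < β k) :
    ∫ x in openSimplex m 1, dirichletWeight β 1 x =
      (∏ k, Gamma (β k)) / Gamma (∑ k, β k) := by
  rw [integral_eq_lintegral_of_nonneg_ae
      ((ae_restrict_iff' (measurableSet_openSimplex m 1)).2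
        (ae_of_all _ fun x hx => dirichletWeight_nonneg β hx))
      (measurable_dirichletWeight β 1).aestronglyMeasurable,
    setLIntegral_dirichletWeight β hβ, ENNReal.toReal_ofReal]
  exact div_nonneg (prod_nonneg fun k _ => (Gamma_pos_of_pos (hβ k)).le)
    (Gamma_pos_of_pos (sum_pos (fun k _ => hβ k) univ_nonempty)).le

lemma prod_pow_mul_dirichletWeight {m : ℕ} (w : Fin (m + 1) → ℕ) (α : Fin (m + 1) → ℝ)
    {c : ℝ} {x : Fin m → ℝ} (hx : x ∈ openSimplex m c) :
    (∏ k, appendRemainder c x k ^ w k) * dirichletWeight α c x =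
      dirichletWeight (fun k => w k + α k) c x := by
  rw [dirichletWeight, dirichletWeight, ← prod_mul_distrib]
  refine prod_congr rfl fun k _ => ?_
  rw [← rpow_natCast, ← rpow_add (appendRemainder_pos hx k), add_sub_assoc]

/-- Marginalizing a multinomial over a Dirichlet-distributed probability vector yields the
Dirichlet-multinomial (Pólya) distribution. -/
theorem dirichlet_multinomial_marginal
    (n : ℕ) (α : Fin (n + 1) → ℝ) (hα : ∀ k, 0 < α k)
    (w : Fin (n + 1) → ℕ) (L : ℕ) (hL : L = ∑ k, w k) (A : ℝ) (hA : A = ∑ k, α k) :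
    ∫ x in {x : Fin n → ℝ | (∀ i, 0 < x i) ∧ ∑ i, x i < 1},
        (((Nat.factorial L) : ℝ) / ∏ k, ((Nat.factorial (w k)) : ℝ)) *
          (∏ k, (Fin.snoc x (1 - ∑ i, x i) : Fin (n + 1) → ℝ) k ^ w k) *
          (Real.Gamma A / ∏ k, Real.Gamma (α k)) *
          (∏ k, (Fin.snoc x (1 - ∑ i, x i) : Fin (n + 1) → ℝ) k ^ (α k - 1)) =
      (((Nat.factorial L) : ℝ) / ∏ k, ((Nat.factorial (w k)) : ℝ)) * (Real.Gamma A / Real.Gamma ((L : ℝ) + A)) *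
        ∏ k, (Real.Gamma ((w k : ℝ) + α k) / Real.Gamma (α k)) := by
  set C := ((Nat.factorial L) : ℝ) / ∏ k, ((Nat.factorial (w k)) : ℝ)
  have hβ : ∀ k, 0 < (w k : ℝ) + α k :=
    fun k => add_pos_of_nonneg_of_pos (Nat.cast_nonneg _) (hα k)
  have hsum : ∑ k, ((w k : ℝ) + α k) = L + A := by simp [hL, hA, sum_add_distrib]
  calc _ = ∫ x in openSimplex n 1, C * (Gamma A / ∏ k, Gamma (α k)) *
          dirichletWeight (fun k => w k + α k) 1 x := by
        refine setIntegral_congr_fun (measurableSet_openSimplex n 1) fun x hx => ?_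
        rw [← prod_pow_mul_dirichletWeight w α hx]
        simp only [dirichletWeight, appendRemainder]
        ring
    _ = _ := by
        rw [integral_const_mul, setIntegral_dirichletWeight _ hβ, hsum, prod_div_distrib]
        ring
end

section
/- Let I, J, K ≥ 1, let w : Fin J → Fin I → ℝ be nonnegative, let Θ : Fin J → Fin K → ℝ have strictly positive entries θ_{j,k} normalized so that ∑_j θ_{j,k} = 1 for every k, and let l : Fin K → Fin I → ℝ be strictly positive; write (Θl_i)_j = ∑_k θ_{j,k} l_{k,i} and assume (Θl_i)_j > 0 for all i, j. Suppose (a) for every k and i: ∑_j θ_{j,k} · w_{j,i} / (Θl_i)_j = 1, and (b) for every j and k: θ_{j,k} = (θ_{j,k} · ∑_i l_{k,i} · w_{j,i} / (Θl_i)_j) / (∑_{j'} θ_{j',k} · ∑_i l_{k,i} · w_{j',i} / (Θl_i)_{j'}). Then for every j and k the NMF fixed-point equation holds: θ_{j,k} = θ_{j,k} · ∑_i (l_{k,i} / ∑_{i'} l_{k,i'}) · w_{j,i} / (Θl_i)_j. (This is the key computation showing that the non-negative matrix factorisation update equations occur at a maximum of the Gamma-Poisson likelihood with α = β = 0.) 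-/
open Real Finset

/-- The NMF multiplicative update equations occur at a maximum of the Gamma-Poisson
likelihood with `α = β = 0`: the key computation. -/
theorem nmf_fixed_point_of_normalized_updates
    (I J K : ℕ) (hI : 1 ≤ I) (hJ : 1 ≤ J) (hK : 1 ≤ K)
    (w : Fin J → Fin I → ℝ) (hw : ∀ j i, 0 ≤ w j i)
    (Θ : Fin J → Fin K → ℝ) (hΘ : ∀ j k, 0 < Θ j k)
    (hnorm : ∀ k, ∑ j, Θ j k = 1)
    (l : Fin K → Fin I → ℝ) (hl : ∀ k i, 0 < l k i)
    (hΘl : ∀ i j, 0 < ∑ k, Θ j k * l k i)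
    (ha : ∀ k i, ∑ j, Θ j k * w j i / (∑ k', Θ j k' * l k' i) = 1)
    (hb : ∀ j k, Θ j k =
      (Θ j k * ∑ i, l k i * w j i / (∑ k', Θ j k' * l k' i)) /
        (∑ j', Θ j' k * ∑ i, l k i * w j' i / (∑ k', Θ j' k' * l k' i))) :
    ∀ j k, Θ j k =
      Θ j k * ∑ i, (l k i / ∑ i', l k i') * w j i / (∑ k', Θ j k' * l k' i) := by
  intro j k
  have hIne : (Finset.univ : Finset (Fin I)).Nonempty := by
    rw [Finset.univ_nonempty_iff]
    exact Fin.pos_iff_nonempty.mp hI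
  have hLpos : 0 < ∑ i', l k i' := Finset.sum_pos (fun i _ => hl k i) hIne
  have hD : (∑ j', Θ j' k * ∑ i, l k i * w j' i / (∑ k', Θ j' k' * l k' i))
      = ∑ i', l k i' := by
    calc ∑ j', Θ j' k * ∑ i, l k i * w j' i / (∑ k', Θ j' k' * l k' i)
        = ∑ j', ∑ i, l k i * (Θ j' k * w j' i / (∑ k', Θ j' k' * l k' i)) := by
          refine Finset.sum_congr rfl fun j' _ => ?_
          rw [Finset.mul_sum]
          exact Finset.sum_congr rfl fun i _ => by ring
      _ = ∑ i, ∑ j', l k i * (Θ j' k * w j' i / (∑ k', Θ j' k' * l k' i)) :=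
          Finset.sum_comm
      _ = ∑ i', l k i' := by
          refine Finset.sum_congr rfl fun i _ => ?_
          rw [← Finset.mul_sum, ha k i, mul_one]
  have hS : (∑ i, (l k i / ∑ i', l k i') * w j i / (∑ k', Θ j k' * l k' i))
      = (∑ i, l k i * w j i / (∑ k', Θ j k' * l k' i)) / (∑ i', l k i') := by
    rw [Finset.sum_div]
    exact Finset.sum_congr rfl fun i _ => by ring
  rw [hS, mul_div_assoc' (Θ j k), ← hD]
  exact hb j k
end

section
/- For every a > 0 and b > 0, ∫₀^∞ log(x) · (b^a · x^{a−1} · exp(−b x) / Γ(a)) dx = Γ′(a)/Γ(a) − log b, where Γ′ denotes the derivative of the real Gamma function. (The expectation of log of a Gamma(a, b) random variable is the digamma function at a minus log b.) -/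
/-!
Differentiating the Gamma integral under the integral sign (it is a Mellin transform) gives
`Γ'(a) = ∫ log t · e^{-t} t^{a-1} dt`. The substitution `t = b x` turns the expectation into
`∫ (log t - log b) · e^{-t} t^{a-1} dt / Γ(a)`, and the second term integrates to `log b · Γ(a)`.
-/

open Real MeasureTheory Set Filter Asymptotics
open scoped Topology

namespace Real

theorem integrableOn_log_mul_GammaIntegrand {s : ℝ} (hs : 0 < s) :
    IntegrableOn (fun t : ℝ => log t * (exp (-t) * t ^ (s - 1))) (Ioi 0) := by
  have hexp_top : (fun t : ℝ => exp (-t)) =O[atTop] (· ^ (-(s + 2))) := by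
    simpa only [neg_one_mul] using (isLittleO_exp_neg_mul_rpow_atTop zero_lt_one _).isBigO
  have hexp_bot : (fun t : ℝ => exp (-t)) =O[𝓝[>] 0] (· ^ (-0 : ℝ)) := by
    simp_rw [neg_zero, rpow_zero]
    refine isBigO_const_of_tendsto (?_ : Tendsto _ _ (𝓝 (1 : ℝ))) one_ne_zero
    exact ((continuous_exp.comp continuous_neg).tendsto' 0 1 (by simp)).mono_left
      nhdsWithin_le_nhds
  have hcont : ContinuousOn (fun t : ℝ => log t • exp (-t)) (Ioi 0) :=
    (continuousOn_log.mono fun _ ht => ne_of_gt ht).smul (by fun_prop)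
  refine (mellin_convergent_of_isBigO_scalar
    (hcont.locallyIntegrableOn measurableSet_Ioi)
    (isBigO_rpow_top_log_smul (by linarith : s + 1 < s + 2) hexp_top) (by linarith)
    (isBigO_rpow_zero_log_smul (half_pos hs) hexp_bot) (half_lt_self hs)).congr_fun
      (fun t _ => by simp only [smul_eq_mul]; ring) measurableSet_Ioi

theorem hasDerivAt_Gamma_integral_log_mul {s : ℝ} (hs : 0 < s) :
    HasDerivAt Gamma (∫ t in Ioi 0, log t * (exp (-t) * t ^ (s - 1))) s := by
  have hs' : 0 < (s : ℂ).re := by simpa using hs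
  have hΓ : HasDerivAt Complex.Gamma
      (∫ t : ℝ in Ioi 0, (t : ℂ) ^ ((s : ℂ) - 1) * (log t * exp (-t))) s := by
    refine (Complex.hasDerivAt_GammaIntegral hs').congr_of_eventuallyEq ?_
    filter_upwards [(Complex.continuous_re.isOpen_preimage _ isOpen_Ioi).mem_nhds hs'] with z hz
    exact Complex.Gamma_eq_integral hz
  have hintegral : ∫ t : ℝ in Ioi 0, (t : ℂ) ^ ((s : ℂ) - 1) * (log t * exp (-t)) =
      ((∫ t in Ioi 0, log t * (exp (-t) * t ^ (s - 1)) : ℝ) : ℂ) := by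
    refine (setIntegral_congr_fun measurableSet_Ioi fun t ht => ?_).trans integral_ofReal
    change _ = ((log t * (exp (-t) * t ^ (s - 1)) : ℝ) : ℂ)
    rw [Complex.ofReal_mul, Complex.ofReal_mul, Complex.ofReal_cpow (le_of_lt ht),
      Complex.ofReal_sub, Complex.ofReal_one]
    ring
  simpa only [hintegral, Complex.Gamma_ofReal, Complex.ofReal_re] using hΓ.real_of_complex

end Real

theorem setIntegral_Ioi_mul_rescaled_GammaIntegrand (f : ℝ → ℝ) (a : ℝ) {b : ℝ} (hb : 0 < b) :
    ∫ x in Ioi (0 : ℝ), f x * (b ^ a * x ^ (a - 1) * exp (-(b * x))) =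
      ∫ t in Ioi (0 : ℝ), f (t / b) * (exp (-t) * t ^ (a - 1)) := by
  set g : ℝ → ℝ := fun t => f (t / b) * (exp (-t) * t ^ (a - 1))
  have hg : ∀ x ∈ Ioi (0 : ℝ), f x * (b ^ a * x ^ (a - 1) * exp (-(b * x))) = b * g (b * x) := by
    intro x hx
    have hbx : b ^ a = b ^ (a - 1) * b := by rw [← rpow_add_one hb.ne', sub_add_cancel]
    simp only [g, mul_div_cancel_left₀ x hb.ne', mul_rpow hb.le (le_of_lt hx), hbx]
    ring
  rw [setIntegral_congr_fun measurableSet_Ioi hg, integral_const_mul,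
    integral_comp_mul_left_Ioi g 0 hb, mul_zero, smul_eq_mul, mul_inv_cancel_left₀ hb.ne']

/-- The expectation of the logarithm of a Gamma(a, b) random variable is the digamma
function at `a` minus `log b`. -/
theorem gamma_expectation_log (a b : ℝ) (ha : 0 < a) (hb : 0 < b) :
    ∫ x in Set.Ioi (0 : ℝ),
        Real.log x * (b ^ a * x ^ (a - 1) * Real.exp (-(b * x)) / Real.Gamma a) =
      deriv Real.Gamma a / Real.Gamma a - Real.log b := by
  have hlog_div : ∀ t ∈ Ioi (0 : ℝ), log (t / b) * (exp (-t) * t ^ (a - 1)) =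
      log t * (exp (-t) * t ^ (a - 1)) - log b * (exp (-t) * t ^ (a - 1)) := fun t ht => by
    rw [log_div (ne_of_gt ht) hb.ne']
    ring
  simp_rw [mul_div_assoc']
  rw [integral_div, setIntegral_Ioi_mul_rescaled_GammaIntegrand log a hb,
    setIntegral_congr_fun measurableSet_Ioi hlog_div,
    integral_sub (integrableOn_log_mul_GammaIntegrand ha)
      ((GammaIntegral_convergent ha).const_mul _),
    integral_const_mul, ← Gamma_eq_integral ha, (hasDerivAt_Gamma_integral_log_mul ha).deriv]
  field_simp [(Gamma_pos_of_pos ha).ne']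
end
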